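/- Let X be a strongly regular graph with parameters (n,k,λ,μ). If X is non-trivially unstable, then λ = μ > 0. -/

import Mathlib

/-!
An automorphism of `BX` maps each layer `V × {i}` into a single layer, because `xor` of the
layer of a vertex and of its image is constant along edges and `BX` is connected (`X` is
connected and not bipartite). So it is given by permutations `f`, `g` of `V` (its action on
the two layers) with `f x ~ g y ↔ x ~ y`. Then `g` maps the common neighbours of `x, y` onto
those of `f x, f y`; when `λ ≠ μ` the number of common neighbours of two distinct vertices
detects adjacency, so `f` is an automorphism of `X`, and twin-freeness forces `g = f`: the
automorphism is expected. Finally `μ > 0` because diameter `2` yields two non-adjacent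
vertices with a common neighbour.
-/

open SimpleGraph

/-- The canonical double cover `BX = X × K₂` of a graph `X`:
vertex set `V × Bool`, with `(x,i)` adjacent to `(y,j)` iff `x ~ y` in `X` and `i ≠ j`. -/
def doubleCover {V : Type*} (X : SimpleGraph V) : SimpleGraph (V × Bool) where
  Adj p q := X.Adj p.1 q.1 ∧ p.2 ≠ q.2
  symm := ⟨fun p q h => ⟨h.1.symm, Ne.symm h.2⟩⟩
  loopless := ⟨fun p h => h.2 rfl⟩

/-- An automorphism of `BX` is *expected* if it lies in the subgroup generated by the
lifts of automorphisms of `X` and the coordinate swap `τ`, i.e. it has the form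
`(x,i) ↦ (φ x, i + b)` for some automorphism `φ` of `X` and some `b`. -/
def IsExpected {V : Type*} (X : SimpleGraph V) (α : doubleCover X ≃g doubleCover X) : Prop :=
  ∃ (φ : X ≃g X) (b : Bool), ∀ p : V × Bool, α p = (φ p.1, xor p.2 b)

/-- A graph is *stable* if every automorphism of its canonical double cover is expected. -/
def IsStable {V : Type*} (X : SimpleGraph V) : Prop :=
  ∀ α : doubleCover X ≃g doubleCover X, IsExpected X α

/-- A graph is *twin-free* if distinct vertices have distinct neighbourhoods. -/
def TwinFree {V : Type*} (X : SimpleGraph V) : Prop :=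
  ∀ u v : V, X.neighborSet u = X.neighborSet v → u = v

theorem SimpleGraph.Reachable.eq_of_forall_adj {W β : Type*} {G : SimpleGraph W} {f : W → β}
    (hf : ∀ u v, G.Adj u v → f u = f v) {u v : W} (h : G.Reachable u v) : f u = f v := by
  obtain ⟨w⟩ := h
  induction w with
  | nil => rfl
  | cons huv _ ih => exact (hf _ _ huv).trans ih

section

variable {V : Type*} {X : SimpleGraph V}

theorem SimpleGraph.Walk.reachable_doubleCover {x y : V} (w : X.Walk x y) (i : Bool) :
    (doubleCover X).Reachable (x, i) (y, xor i (decide (Odd w.length))) := by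
  induction w generalizing i with
  | nil => simp
  | cons h w ih =>
    have hstep : (doubleCover X).Adj (_, i) (_, !i) := ⟨h, by simp⟩
    convert hstep.reachable.trans (ih !i) using 2
    cases i <;> simp [Nat.odd_add_one, ← Nat.not_even_iff_odd]

theorem connected_doubleCover (hconn : X.Connected) (hnbip : ¬X.Colorable 2) :
    (doubleCover X).Connected := by
  obtain ⟨u, w, hw⟩ : ∃ u, ∃ w : X.Walk u u, Odd w.length := by
    simpa [two_colorable_iff_forall_loop_even] using hnbip
  have hflip : (doubleCover X).Reachable (u, true) (u, false) := by
    simpa [hw] using w.reachable_doubleCover true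
  refine (connected_iff_exists_forall_reachable _).mpr ⟨(u, false), fun ⟨x, i⟩ => ?_⟩
  obtain ⟨p⟩ := hconn x u
  have hx := p.reachable_doubleCover i
  cases j : xor i (decide (Odd p.length))
  · exact (j ▸ hx).symm
  · exact ((j ▸ hx).trans hflip).symm

theorem SimpleGraph.Connected.exists_snd_eq_xor {W : Type*} {Y : SimpleGraph W}
    (hconn : (doubleCover X).Connected) (α : doubleCover X →g doubleCover Y) :
    ∃ b : Bool, ∀ p, (α p).2 = xor p.2 b := by
  obtain ⟨p₀⟩ := hconn.nonempty
  refine ⟨xor (α p₀).2 p₀.2, fun p => ?_⟩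
  have hshift : xor (α p).2 p.2 = xor (α p₀).2 p₀.2 :=
    (hconn p p₀).eq_of_forall_adj (f := fun p => xor (α p).2 p.2) fun q r hqr => by
      rw [Bool.eq_not.mpr hqr.2.symm, Bool.eq_not.mpr (α.map_adj hqr).2.symm]
      simp
  rw [← hshift, Bool.xor_left_comm, Bool.xor_self, Bool.xor_false]

/-- The two-fold automorphisms (TF-automorphisms) of Lauri, Mizzi and Scapellato. -/
def IsTwoFoldAut (X : SimpleGraph V) (f g : V ≃ V) : Prop :=
  ∀ x y, X.Adj (f x) (g y) ↔ X.Adj x y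

section Layers

variable (α : doubleCover X ≃g doubleCover X) {b : Bool} (hb : ∀ p, (α p).2 = xor p.2 b)

def layerEquiv (i : Bool) : V ≃ V where
  toFun x := (α (x, i)).1
  invFun y := (α.symm (y, xor i b)).1
  left_inv x := by
    dsimp only
    rw [← (hb (x, i) : (α (x, i)).2 = xor i b), Prod.mk.eta, α.symm_apply_apply]
  right_inv y := by
    have hlayer : (α.symm (y, xor i b)).2 = i := by
      simpa using (hb (α.symm (y, xor i b))).symm
    dsimp only
    rw [show ((α.symm (y, xor i b)).1, i) = α.symm (y, xor i b) from Prod.ext rfl hlayer.symm,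
      α.apply_symm_apply]

theorem apply_eq_layerEquiv (x : V) (i : Bool) : α (x, i) = (layerEquiv α hb i x, xor i b) :=
  Prod.ext rfl (hb _)

theorem isTwoFoldAut_layerEquiv :
    IsTwoFoldAut X (layerEquiv α hb false) (layerEquiv α hb true) := fun x y => by
  have h := α.map_adj_iff (v := (x, false)) (w := (y, true))
  rw [apply_eq_layerEquiv α hb, apply_eq_layerEquiv α hb] at h
  simpa [doubleCover] using h

end Layers

namespace IsTwoFoldAut

variable {f g : V ≃ V}

theorem card_commonNeighbors [Fintype V] [DecidableRel X.Adj] (h : IsTwoFoldAut X f g)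
    (x y : V) :
    Fintype.card (X.commonNeighbors (f x) (f y)) = Fintype.card (X.commonNeighbors x y) :=
  (Fintype.card_congr (g.subtypeEquiv fun z => by
    simp only [mem_commonNeighbors, h x z, h y z])).symm

theorem eq_of_twinFree (htf : TwinFree X) (h : IsTwoFoldAut X f g)
    (hf : ∀ x y, X.Adj (f x) (f y) ↔ X.Adj x y) : g = f :=
  Equiv.ext fun y => htf _ _ <| Set.ext fun z => by
    obtain ⟨x, rfl⟩ := f.surjective z
    simp only [mem_neighborSet, X.adj_comm _ (f x), h x y, hf]

end IsTwoFoldAut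

namespace SimpleGraph.IsSRGWith

variable [Fintype V] [DecidableRel X.Adj] {n k l m : ℕ}

theorem adj_iff_card_commonNeighbors_eq (h : X.IsSRGWith n k l m) (hlm : l ≠ m) {x y : V}
    (hxy : x ≠ y) : X.Adj x y ↔ Fintype.card (X.commonNeighbors x y) = l :=
  ⟨h.of_adj x y, fun hl => by_contra fun hn => hlm (hl.symm.trans (h.of_not_adj hxy hn))⟩

theorem adj_iff_of_card_commonNeighbors (h : X.IsSRGWith n k l m) (hlm : l ≠ m) {f : V → V}
    (hf : f.Injective)
    (hcard : ∀ x y, Fintype.card (X.commonNeighbors (f x) (f y)) =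
      Fintype.card (X.commonNeighbors x y))
    (x y : V) : X.Adj (f x) (f y) ↔ X.Adj x y := by
  rcases eq_or_ne x y with rfl | hxy
  · simp
  · rw [h.adj_iff_card_commonNeighbors_eq hlm (hf.ne hxy),
      h.adj_iff_card_commonNeighbors_eq hlm hxy, hcard]

theorem isStable_of_ne (h : X.IsSRGWith n k l m) (hlm : l ≠ m)
    (hconn : (doubleCover X).Connected) (htf : TwinFree X) : IsStable X := fun α => by
  obtain ⟨b, hb⟩ := hconn.exists_snd_eq_xor α.toHom
  have htwo := isTwoFoldAut_layerEquiv α hb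
  have hf := h.adj_iff_of_card_commonNeighbors hlm (layerEquiv α hb false).injective
    htwo.card_commonNeighbors
  have hgf := htwo.eq_of_twinFree htf hf
  refine ⟨⟨layerEquiv α hb false, hf _ _⟩, b, fun ⟨x, i⟩ => ?_⟩
  cases i
  · exact apply_eq_layerEquiv α hb x false
  · rw [apply_eq_layerEquiv α hb x true, hgf]
    rfl

theorem pos_mu_of_one_lt_dist (h : X.IsSRGWith n k l m) {u v : V} (huv : 1 < X.dist u v) :
    0 < m := by
  have hreach : X.Reachable u v := .of_dist_ne_zero (by omega)
  obtain ⟨w, hw⟩ := hreach.exists_walk_length_eq_dist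
  obtain ⟨x, a, z, hxa, haz, hxz, hne⟩ := w.exists_adj_adj_not_adj_ne hw huv
  rw [← h.of_not_adj hne hxz]
  exact Fintype.card_pos_iff.mpr ⟨⟨a, hxa, haz.symm⟩⟩

end SimpleGraph.IsSRGWith

end

theorem srg_nontrivially_unstable_lambda_eq_mu {V : Type*} [Fintype V] (X : SimpleGraph V)
    [DecidableRel X.Adj] (n k l m : ℕ)
    (hsrg : X.IsSRGWith n k l m) (hconn : X.Connected) (hdiam : X.diam = 2)
    (hunst : ¬IsStable X) (hnbip : ¬X.Colorable 2) (htf : TwinFree X) :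
    l = m ∧ 0 < m := by
  constructor
  · by_contra hlm
    exact hunst (hsrg.isStable_of_ne hlm (connected_doubleCover hconn hnbip) htf)
  · have := hconn.nonempty
    obtain ⟨u, v, huv⟩ := X.exists_dist_eq_diam
    exact hsrg.pos_mu_of_one_lt_dist (by omega : 1 < X.dist u v)
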